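/- For k = 3, the element C**_3 ∈ 𝔖_3 given by the Sym(3)-invariant parametrization x = 12/22, a = 5/22, y = −3/22, b = −2/22 satisfies g_{S_3}(C**_3) = 12/11, attained exactly at the samples in S_3(2,2) ∪ S_3(3,3,0). Moreover 12/11 is the minimum of g_{S_3} over 𝔖_3. -/

import Mathlib

open Finset Filter

/-- Membership in the affine set 𝔖ₖ. -/
def inSk (k : ℕ) (C : Fin k → Matrix (Fin k) (Fin k) ℝ) : Prop :=
  ∀ ℓ : Fin k,
    (∀ i : Fin k, i ≠ ℓ → ∑ j, C ℓ i j = 0) ∧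
    (∀ j : Fin k, j ≠ ℓ → ∑ i, C ℓ i j = 0) ∧
    (∑ i, ∑ j, C ℓ i j = 1)

/-- A k-sample: nonempty subset of [k]×[k] with pairwise distinct second coordinates. -/
def IsSample {k : ℕ} (s : Finset (Fin k × Fin k)) : Prop :=
  s.Nonempty ∧ ∀ p ∈ s, ∀ q ∈ s, p ≠ q → p.2 ≠ q.2

/-- g_s^{(ℓ)}(C) -/
def gPart {k : ℕ} (s : Finset (Fin k × Fin k)) (C : Fin k → Matrix (Fin k) (Fin k) ℝ)
    (ℓ : Fin k) : ℝ :=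
  ∑ p ∈ s, C ℓ p.1 p.2

/-- g_s(C) -/
def gSample {k : ℕ} (s : Finset (Fin k × Fin k)) (C : Fin k → Matrix (Fin k) (Fin k) ℝ) : ℝ :=
  ∑ ℓ : Fin k, |gPart s C ℓ|

/-- g_{S_k}(C) : the maximum of g_s(C) over all k-samples s. -/
noncomputable def gMax (k : ℕ) (C : Fin k → Matrix (Fin k) (Fin k) ℝ) : ℝ :=
  ⨆ s : {s : Finset (Fin k × Fin k) // IsSample s}, gSample s.1 C

/-- multiplicity of ℓ in the multiset of coordinates of elements of s -/
def mult {k : ℕ} (s : Finset (Fin k × Fin k)) (ℓ : Fin k) : ℕ :=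
  (s.filter (fun p => p.1 = ℓ)).card + (s.filter (fun p => p.2 = ℓ)).card

/-- β(s): number of distinct indices among coordinates of s -/
def beta {k : ℕ} (s : Finset (Fin k × Fin k)) : ℕ :=
  (s.image Prod.fst ∪ s.image Prod.snd).card

/-- γ(s): number of diagonal elements of s -/
def gamma {k : ℕ} (s : Finset (Fin k × Fin k)) : ℕ :=
  (s.filter (fun p => p.1 = p.2)).card

/-- the strong homogeneous flow C*_k -/
noncomputable def Cstar (k : ℕ) : Fin k → Matrix (Fin k) (Fin k) ℝ :=
  fun ℓ i j =>
    if i = ℓ ∧ j = ℓ then 2/(k:ℝ) - 1/(k:ℝ)^2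
    else if i = ℓ ∨ j = ℓ then 1/(k:ℝ) - 1/(k:ℝ)^2
    else -1/(k:ℝ)^2

/-- the Sym(k)-invariant tuple with parameters x (i=j=ℓ), y (i=j≠ℓ),
a (exactly one of i,j equals ℓ), b (otherwise) -/
def Cfix (k : ℕ) (x y a b : ℝ) : Fin k → Matrix (Fin k) (Fin k) ℝ :=
  fun ℓ i j =>
    if i = ℓ ∧ j = ℓ then x
    else if i = j then y
    else if i = ℓ ∨ j = ℓ then a
    else b

/-- The Sym(k)-action on tuples of matrices. -/
def permAct {k : ℕ} (σ : Equiv.Perm (Fin k)) (C : Fin k → Matrix (Fin k) (Fin k) ℝ) :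
    Fin k → Matrix (Fin k) (Fin k) ℝ :=
  fun ℓ i j => C (σ⁻¹ ℓ) (σ⁻¹ i) (σ⁻¹ j)

/-- optimal value O_k -/
noncomputable def Ovalue (k : ℕ) : ℝ := sInf {y | ∃ C, inSk k C ∧ gMax k C = y}

/-- the optimal point C**₃, parameters x = 12/22, y = −3/22, a = 5/22, b = −2/22 -/
noncomputable def Cstst3 : Fin 3 → Matrix (Fin 3) (Fin 3) ℝ :=
  Cfix 3 (12/22) (-3/22) (5/22) (-2/22)

/-!
All entries of `22 • C**₃` are integers, so the values `g_s(C**₃)` can be enumerated over the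
finitely many samples: their maximum is `24/22 = 12/11`, reached exactly on
`S₃(2,2) ∪ S₃(3,3,0)`.

The lower bound is an LP duality argument. For a sample `s` and signs `ε_ℓ = ±1` we have
`∑_ℓ ε_ℓ g_s^{(ℓ)}(C) ≤ g_s(C)`. Take the eleven tight samples `{(i,i),(j,j)}`, `{(i,i),(i,j)}`
and the two derangements, with `ε_ℓ = +1` exactly when `ℓ` is a coordinate of `s`. The sum of
these signed functionals is `2 ∑_ℓ (row ℓ + column ℓ of C^{(ℓ)})`, and on `𝔖₃` row `ℓ` and
column `ℓ` of `C^{(ℓ)}` both sum to `1`, the other rows and columns vanishing. Hence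
`11 g_{S₃}(C) ≥ 12`.
-/

section

variable {k : ℕ}

theorem inSk.sum_row_self {C : Fin k → Matrix (Fin k) (Fin k) ℝ} (hC : inSk k C) (ℓ : Fin k) :
    ∑ j, C ℓ ℓ j = 1 := by
  rw [← (hC ℓ).2.2, sum_eq_single ℓ (fun i _ hi => (hC ℓ).1 i hi) (by simp)]

theorem inSk.sum_col_self {C : Fin k → Matrix (Fin k) (Fin k) ℝ} (hC : inSk k C) (ℓ : Fin k) :
    ∑ i, C ℓ i ℓ = 1 :=
  calc ∑ i, C ℓ i ℓ = ∑ j, ∑ i, C ℓ i j :=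
        (sum_eq_single ℓ (fun j _ hj => (hC ℓ).2.1 j hj) (by simp)).symm
    _ = ∑ i, ∑ j, C ℓ i j := sum_comm
    _ = 1 := (hC ℓ).2.2

theorem Cfix_apply_comm (x y a b : ℝ) (ℓ i j : Fin k) :
    Cfix k x y a b ℓ i j = Cfix k x y a b ℓ j i := by
  unfold Cfix
  grind

theorem Cfix_sum_row_of_ne {x y a b : ℝ} {ℓ i : Fin k} (hi : i ≠ ℓ) :
    ∑ j, Cfix k x y a b ℓ i j = k * b + (y - b) + (a - b) := by
  have h : ∀ j, Cfix k x y a b ℓ i j =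
      b + (if j = i then y - b else 0) + (if j = ℓ then a - b else 0) := by
    intro j
    unfold Cfix
    split_ifs <;> grind
  simp only [h, sum_add_distrib, sum_ite_eq', mem_univ, if_true, sum_const, card_univ,
    Fintype.card_fin, nsmul_eq_mul]

theorem Cfix_sum_row_self {x y a b : ℝ} (ℓ : Fin k) :
    ∑ j, Cfix k x y a b ℓ ℓ j = k * a + (x - a) := by
  have h : ∀ j, Cfix k x y a b ℓ ℓ j = a + (if j = ℓ then x - a else 0) := by
    intro j
    unfold Cfix
    split_ifs <;> grind
  simp only [h, sum_add_distrib, sum_ite_eq', mem_univ, if_true, sum_const, card_univ,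
    Fintype.card_fin, nsmul_eq_mul]

theorem inSk_Cfix {x y a b : ℝ} (hrow : y + a + (k - 2) * b = 0) (hself : x + (k - 1) * a = 1) :
    inSk k (Cfix k x y a b) := by
  have hrow' : ∀ ℓ i : Fin k, i ≠ ℓ → ∑ j, Cfix k x y a b ℓ i j = 0 := fun ℓ i hi => by
    rw [Cfix_sum_row_of_ne hi]
    linarith
  refine fun ℓ => ⟨hrow' ℓ, fun j hj => ?_, ?_⟩
  · simpa only [Cfix_apply_comm x y a b ℓ _ j] using hrow' ℓ j hj
  · rw [sum_eq_single ℓ (fun i _ hi => hrow' ℓ i hi) (by simp), Cfix_sum_row_self]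
    linarith

instance : DecidablePred (@IsSample k) := fun s => by
  unfold IsSample
  infer_instance

theorem gSample_le_gMax (C : Fin k → Matrix (Fin k) (Fin k) ℝ) {s : Finset (Fin k × Fin k)}
    (hs : IsSample s) : gSample s C ≤ gMax k C :=
  le_ciSup (f := fun s : {s // IsSample s} => gSample s.1 C) (Set.finite_range _).bddAbove ⟨s, hs⟩

theorem signed_sum_gPart_le_gSample (s : Finset (Fin k × Fin k))
    (C : Fin k → Matrix (Fin k) (Fin k) ℝ) {ε : Fin k → ℝ} (hε : ∀ ℓ, |ε ℓ| ≤ 1) :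
    ∑ ℓ, ε ℓ * gPart s C ℓ ≤ gSample s C :=
  sum_le_sum fun ℓ _ => (le_abs_self _).trans <| by
    rw [abs_mul]
    exact mul_le_of_le_one_left (abs_nonneg _) (hε ℓ)

theorem sum_sum_signed_gPart (T : Finset (Finset (Fin k × Fin k)))
    (C : Fin k → Matrix (Fin k) (Fin k) ℝ) (ε : Finset (Fin k × Fin k) → Fin k → ℤ) :
    ∑ s ∈ T, ∑ ℓ, (ε s ℓ : ℝ) * gPart s C ℓ =
      ∑ ℓ, ∑ i, ∑ j, ((∑ s ∈ T with (i, j) ∈ s, ε s ℓ : ℤ) : ℝ) * C ℓ i j := by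
  rw [sum_comm]
  refine sum_congr rfl fun ℓ _ => ?_
  simp only [gPart, sum_filter, Int.cast_sum, Int.cast_ite, Int.cast_zero, ite_mul, zero_mul,
    sum_mul, mul_sum]
  rw [← Fintype.sum_prod_type', sum_comm]
  simp only [sum_ite_mem, univ_inter]

theorem sum_sum_ite_add_ite_mul (A : Matrix (Fin k) (Fin k) ℝ) (ℓ : Fin k) :
    ∑ i, ∑ j, ((if i = ℓ then 1 else 0) + if j = ℓ then 1 else 0) * A i j =
      ∑ j, A ℓ j + ∑ i, A i ℓ := by
  simp [add_mul, sum_add_distrib, sum_ite_irrel]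

theorem gSample_intCast_div (s : Finset (Fin k × Fin k)) (D : Fin k → Fin k → Fin k → ℤ)
    {n : ℝ} (hn : 0 ≤ n) :
    gSample s (fun ℓ i j => (D ℓ i j : ℝ) / n) =
      ((∑ ℓ, |∑ p ∈ s, D ℓ p.1 p.2| : ℤ) : ℝ) / n := by
  simp only [gSample, gPart, ← sum_div, abs_div, abs_of_nonneg hn]
  push_cast
  rfl

end

def dualSamples : Finset (Finset (Fin 3 × Fin 3)) :=
  {{(0, 0), (1, 1)}, {(0, 0), (2, 2)}, {(1, 1), (2, 2)},
    {(0, 0), (0, 1)}, {(0, 0), (0, 2)}, {(1, 1), (1, 0)}, {(1, 1), (1, 2)},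
    {(2, 2), (2, 0)}, {(2, 2), (2, 1)},
    {(0, 1), (1, 2), (2, 0)}, {(0, 2), (1, 0), (2, 1)}}

def dualSign (s : Finset (Fin 3 × Fin 3)) (ℓ : Fin 3) : ℤ :=
  if ℓ ∈ s.image Prod.fst ∪ s.image Prod.snd then 1 else -1

set_option maxRecDepth 100000 in
theorem dualSamples_isSample : ∀ s ∈ dualSamples, IsSample s := by decide

theorem card_dualSamples : dualSamples.card = 11 := by decide

theorem abs_dualSign_le_one (s : Finset (Fin 3 × Fin 3)) (ℓ : Fin 3) :
    |(dualSign s ℓ : ℝ)| ≤ 1 := by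
  unfold dualSign
  split_ifs <;> norm_num

set_option maxRecDepth 100000 in
theorem sum_dualSign_filter_mem (ℓ i j : Fin 3) :
    ∑ s ∈ dualSamples with (i, j) ∈ s, dualSign s ℓ =
      2 * ((if i = ℓ then 1 else 0) + if j = ℓ then 1 else 0) := by
  revert ℓ i j
  decide

theorem twelve_div_eleven_le_gMax {C : Fin 3 → Matrix (Fin 3) (Fin 3) ℝ} (hC : inSk 3 C) :
    12 / 11 ≤ gMax 3 C := by
  have hsum : ∑ s ∈ dualSamples, ∑ ℓ, (dualSign s ℓ : ℝ) * gPart s C ℓ = 12 := by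
    simp only [sum_sum_signed_gPart, sum_dualSign_filter_mem]
    push_cast
    simp only [mul_assoc, ← mul_sum, sum_sum_ite_add_ite_mul, hC.sum_row_self, hC.sum_col_self]
    norm_num
  have hle : ∑ s ∈ dualSamples, ∑ ℓ, (dualSign s ℓ : ℝ) * gPart s C ℓ ≤ 11 * gMax 3 C :=
    calc _ ≤ ∑ _s ∈ dualSamples, gMax 3 C := sum_le_sum fun s hs =>
          (signed_sum_gPart_le_gSample s C (abs_dualSign_le_one s)).trans
            (gSample_le_gMax C (dualSamples_isSample s hs))
      _ = 11 * gMax 3 C := by rw [sum_const, card_dualSamples, nsmul_eq_mul]; norm_num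
  linarith

-- `22 • Cstst3`, with integer entries so that sample values can be evaluated by `decide`
def Cstst3Num : Fin 3 → Fin 3 → Fin 3 → ℤ := fun ℓ i j =>
  if i = ℓ ∧ j = ℓ then 12 else if i = j then -3 else if i = ℓ ∨ j = ℓ then 5 else -2

def gSampleNum (s : Finset (Fin 3 × Fin 3)) : ℤ := ∑ ℓ, |∑ p ∈ s, Cstst3Num ℓ p.1 p.2|

theorem gSample_Cstst3 (s : Finset (Fin 3 × Fin 3)) :
    gSample s Cstst3 = gSampleNum s / 22 := by
  have h : Cstst3 = fun ℓ i j => (Cstst3Num ℓ i j : ℝ) / 22 := by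
    funext ℓ i j
    simp only [Cstst3, Cfix, Cstst3Num]
    split_ifs <;> norm_num
  rw [h, gSample_intCast_div s _ (by norm_num), gSampleNum]

set_option maxRecDepth 100000 in
theorem gSampleNum_le : ∀ s, IsSample s → gSampleNum s ≤ 24 := by decide

set_option maxRecDepth 100000 in
theorem gSampleNum_eq_iff : ∀ s, IsSample s → (gSampleNum s = 24 ↔
    ((s.card = 2 ∧ beta s = 2) ∨ (s.card = 3 ∧ beta s = 3 ∧ gamma s = 0))) := by decide

theorem gSample_Cstst3_le {s : Finset (Fin 3 × Fin 3)} (hs : IsSample s) :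
    gSample s Cstst3 ≤ 12 / 11 := by
  have h : (gSampleNum s : ℝ) ≤ 24 := by exact_mod_cast gSampleNum_le s hs
  rw [gSample_Cstst3]
  linarith

theorem gSample_Cstst3_eq_iff {s : Finset (Fin 3 × Fin 3)} (hs : IsSample s) :
    gSample s Cstst3 = 12 / 11 ↔
      (s.card = 2 ∧ beta s = 2) ∨ (s.card = 3 ∧ beta s = 3 ∧ gamma s = 0) := by
  rw [gSample_Cstst3, ← gSampleNum_eq_iff s hs, div_eq_iff (by norm_num),
    show (12 / 11 * 22 : ℝ) = (24 : ℤ) by norm_num, Int.cast_inj]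

theorem gMax_Cstst3 : gMax 3 Cstst3 = 12 / 11 := by
  have hs : IsSample ({(0, 0), (1, 1)} : Finset (Fin 3 × Fin 3)) := by decide
  have : Nonempty {s : Finset (Fin 3 × Fin 3) // IsSample s} := ⟨⟨_, hs⟩⟩
  refine le_antisymm (ciSup_le fun s => gSample_Cstst3_le s.2) ?_
  calc (12 / 11 : ℝ) = gSample {(0, 0), (1, 1)} Cstst3 :=
        ((gSample_Cstst3_eq_iff hs).2 (Or.inl (by decide))).symm
    _ ≤ gMax 3 Cstst3 := gSample_le_gMax Cstst3 hs

theorem stmt15 :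
    inSk 3 Cstst3 ∧
    gMax 3 Cstst3 = 12/11 ∧
    (∀ s : Finset (Fin 3 × Fin 3), IsSample s →
      (gSample s Cstst3 = 12/11 ↔
        ((s.card = 2 ∧ beta s = 2) ∨ (s.card = 3 ∧ beta s = 3 ∧ gamma s = 0)))) ∧
    (∀ C : Fin 3 → Matrix (Fin 3) (Fin 3) ℝ, inSk 3 C → 12/11 ≤ gMax 3 C) :=
  ⟨inSk_Cfix (by norm_num) (by norm_num), gMax_Cstst3, fun _ => gSample_Cstst3_eq_iff,
    fun _ => twelve_div_eleven_le_gMax⟩
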